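/- Let 0 < a < c and y ∈ ℝ, y ≠ 0. Define m(y) = ((c + 1/y) * exp(-c*y) - (a + 1/y) * exp(-a*y)) / (exp(-c*y) - exp(-a*y)). Then a < m(y) < c. -/
import Mathlib


theorem truncated_exponential_mean_bounds (a c y : ℝ) (ha : 0 < a) (hac : a < c)
    (hy : y ≠ 0) :
    a < ((c + 1 / y) * Real.exp (-c * y) - (a + 1 / y) * Real.exp (-a * y)) /
          (Real.exp (-c * y) - Real.exp (-a * y)) ∧
    ((c + 1 / y) * Real.exp (-c * y) - (a + 1 / y) * Real.exp (-a * y)) /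
          (Real.exp (-c * y) - Real.exp (-a * y)) < c := by
  set Ec := Real.exp (-c * y) with hEcdef
  set Ea := Real.exp (-a * y) with hEadef
  have hEc : 0 < Ec := Real.exp_pos _
  have hEa : 0 < Ea := Real.exp_pos _
  have hx : (c - a) * y ≠ 0 := mul_ne_zero (by linarith) hy
  have h1 : (c - a) * y + 1 < Real.exp ((c - a) * y) := Real.add_one_lt_exp hx
  have h2 : -((c - a) * y) + 1 < Real.exp (-((c - a) * y)) :=
    Real.add_one_lt_exp (neg_ne_zero.mpr hx)
  have hE : Ea = Ec * Real.exp ((c - a) * y) := by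
    rw [hEadef, hEcdef, ← Real.exp_add]; ring_nf
  have hE2 : Ec = Ea * Real.exp (-((c - a) * y)) := by
    rw [hEadef, hEcdef, ← Real.exp_add]; ring_nf
  have hinv : y * (1 / y) = 1 := mul_one_div_cancel hy
  rcases lt_or_gt_of_ne hy with hyneg | hypos
  · -- y < 0 : Ec > Ea, D > 0
    have hD : 0 < Ec - Ea := by
      have : -a * y < -c * y := by nlinarith
      have := Real.exp_lt_exp.mpr this
      rw [← hEadef, ← hEcdef] at this; linarith
    constructor
    · rw [lt_div_iff₀ hD]
      nlinarith [mul_lt_mul_of_pos_right h2 hEa, mul_pos hEa (Real.exp_pos (-((c - a) * y)))]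
    · rw [div_lt_iff₀ hD]
      nlinarith [mul_lt_mul_of_pos_right h1 hEc, mul_pos hEc (Real.exp_pos ((c - a) * y))]
  · -- y > 0 : D < 0
    have hD : Ec - Ea < 0 := by
      have : -c * y < -a * y := by nlinarith
      have := Real.exp_lt_exp.mpr this
      rw [← hEadef, ← hEcdef] at this; linarith
    constructor
    · rw [lt_div_iff_of_neg hD]
      nlinarith [mul_lt_mul_of_pos_right h1 hEc, mul_pos hEc (Real.exp_pos ((c - a) * y))]
    · rw [div_lt_iff_of_neg hD]
      nlinarith [mul_lt_mul_of_pos_right h2 hEa, mul_pos hEa (Real.exp_pos (-((c - a) * y)))]
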